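/- arXiv:2212.10208 — 5 statements merged into one kernel-verified Lean document; each statement's English description precedes it below -/
import Mathlib

section
/- Let L be a finite lattice and θ an equivalence relation on L. Then θ is an interval relation (i.e., its equivalence classes are pairwise disjoint intervals, all but the singletons being among finitely many chosen intervals) if and only if for all x₁,x₂,y₁,y₂ ∈ L: (i) x₁ θ x₂ implies (x₁ ∨ x₂) θ x₁ and (x₁ ∧ x₂) θ x₁, and (ii) if x₁ θ x₂, y₁ θ y₂, ¬(x₁ θ y₁) and x₁ > y₁, then ¬(x₂ < y₂). -/
/-- An equivalence relation `θ` on a finite lattice is an interval relation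
(its classes are pairwise disjoint intervals, with all nontrivial classes among finitely many
chosen intervals) iff conditions (i) and (ii) hold. -/
theorem intervalRelation_iff {L : Type*} [Lattice L] [Finite L]
    (θ : L → L → Prop) (hequiv : Equivalence θ) :
    (∃ (k : ℕ) (u v : Fin k → L),
        (∀ i, u i ≤ v i) ∧
        (Pairwise fun i j => Disjoint (Set.Icc (u i) (v i)) (Set.Icc (u j) (v j))) ∧
        (∀ x y, θ x y ↔
          (x = y ∨ ∃ i, x ∈ Set.Icc (u i) (v i) ∧ y ∈ Set.Icc (u i) (v i)))) ↔
    ((∀ x₁ x₂, θ x₁ x₂ → θ (x₁ ⊔ x₂) x₁ ∧ θ (x₁ ⊓ x₂) x₁) ∧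
     (∀ x₁ x₂ y₁ y₂, θ x₁ x₂ → θ y₁ y₂ → ¬ θ x₁ y₁ → y₁ < x₁ → ¬ (x₂ < y₂))) := by
  constructor
  · rintro ⟨k, u, v, huv, hdisj, hθ⟩
    constructor
    · intro x₁ x₂ h
      rcases (hθ x₁ x₂).1 h with rfl | ⟨i, hx1, hx2⟩
      · simpa using And.intro (hequiv.refl x₁) (hequiv.refl x₁)
      · have h1 : x₁ ⊔ x₂ ∈ Set.Icc (u i) (v i) :=
          ⟨le_trans hx1.1 le_sup_left, sup_le hx1.2 hx2.2⟩
        have h2 : x₁ ⊓ x₂ ∈ Set.Icc (u i) (v i) :=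
          ⟨le_inf hx1.1 hx2.1, le_trans inf_le_left hx1.2⟩
        exact ⟨(hθ _ _).2 (Or.inr ⟨i, h1, hx1⟩), (hθ _ _).2 (Or.inr ⟨i, h2, hx1⟩)⟩
    · intro x₁ x₂ y₁ y₂ hx hy hnxy hlt hcon
      rcases (hθ x₁ x₂).1 hx with rfl | ⟨i, hx1, hx2⟩
      · rcases (hθ y₁ y₂).1 hy with rfl | ⟨j, hy1, hy2⟩
        · exact lt_asymm hlt hcon
        · exact hnxy ((hθ _ _).2 (Or.inr
            ⟨j, ⟨le_trans hy1.1 hlt.le, hcon.le.trans hy2.2⟩, hy1⟩))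
      · rcases (hθ y₁ y₂).1 hy with rfl | ⟨j, hy1, hy2⟩
        · exact hnxy ((hθ _ _).2 (Or.inr
            ⟨i, hx1, ⟨hx2.1.trans hcon.le, hlt.le.trans hx1.2⟩⟩))
        · have hij : i ≠ j := by
            rintro rfl
            exact hnxy ((hθ _ _).2 (Or.inr ⟨i, hx1, hy1⟩))
          have hwi : x₂ ⊔ y₁ ∈ Set.Icc (u i) (v i) :=
            ⟨le_trans hx2.1 le_sup_left, sup_le hx2.2 (hlt.le.trans hx1.2)⟩
          have hwj : x₂ ⊔ y₁ ∈ Set.Icc (u j) (v j) :=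
            ⟨le_trans hy1.1 le_sup_right, sup_le (hcon.le.trans hy2.2) hy1.2⟩
          exact Set.disjoint_left.mp (hdisj hij) hwi hwj
  · rintro ⟨hi, hii⟩
    classical
    letI s : Setoid L := ⟨θ, hequiv⟩
    haveI := Fintype.ofFinite L
    obtain ⟨k, ⟨e⟩⟩ := Finite.exists_equiv_fin (Quotient s)
    have hsup : ∀ q : Quotient s, ∀ a ∈ {x : L | Quotient.mk s x = q},
        ∀ b ∈ {x : L | Quotient.mk s x = q}, a ⊔ b ∈ {x : L | Quotient.mk s x = q} := by
      intro q a ha b hb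
      simp only [Set.mem_setOf_eq] at *
      have hab : θ a b := Quotient.eq.mp (ha.trans hb.symm)
      rw [← ha]
      exact Quotient.sound ((hi a b hab).1)
    have hinf : ∀ q : Quotient s, ∀ a ∈ {x : L | Quotient.mk s x = q},
        ∀ b ∈ {x : L | Quotient.mk s x = q}, a ⊓ b ∈ {x : L | Quotient.mk s x = q} := by
      intro q a ha b hb
      simp only [Set.mem_setOf_eq] at *
      have hab : θ a b := Quotient.eq.mp (ha.trans hb.symm)
      rw [← ha]
      exact Quotient.sound ((hi a b hab).2)
    set T : Fin k → Finset L :=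
      fun i => Finset.univ.filter (fun x => Quotient.mk s x = e.symm i) with hT
    have hne : ∀ i, (T i).Nonempty := by
      intro i
      obtain ⟨a, ha⟩ := (e.symm i).exists_rep
      exact ⟨a, by simp [hT, ha]⟩
    set uu : Fin k → L := fun i => (T i).inf' (hne i) id with huu
    set vv : Fin k → L := fun i => (T i).sup' (hne i) id with hvv
    have hTmem : ∀ i x, x ∈ T i ↔ Quotient.mk s x = e.symm i := by
      intro i x; simp [hT]
    have huq : ∀ i, Quotient.mk s (uu i) = e.symm i := by
      intro i
      exact Finset.inf'_mem _ (hinf (e.symm i)) (T i) (hne i) id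
        (fun x hx => (hTmem i x).1 hx)
    have hvq : ∀ i, Quotient.mk s (vv i) = e.symm i := by
      intro i
      exact Finset.sup'_mem _ (hsup (e.symm i)) (T i) (hne i) id
        (fun x hx => (hTmem i x).1 hx)
    have hicc : ∀ i x, x ∈ Set.Icc (uu i) (vv i) ↔ Quotient.mk s x = e.symm i := by
      intro i x
      constructor
      · rintro ⟨h1, h2⟩
        by_contra hq
        -- x ≠ uu i and x ≠ vv i
        have hxu : x ≠ uu i := fun h => hq (h ▸ huq i)
        have hxv : x ≠ vv i := fun h => hq (h ▸ hvq i)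
        have h1' : uu i < x := lt_of_le_of_ne h1 (Ne.symm hxu)
        have h2' : x < vv i := lt_of_le_of_ne h2 hxv
        have huv : θ (uu i) (vv i) := Quotient.eq.mp ((huq i).trans (hvq i).symm)
        have hnθ : ¬ θ x (uu i) := by
          intro h
          exact hq ((Quotient.sound h).trans (huq i))
        exact hii x x (uu i) (vv i) (hequiv.refl x) huv hnθ h1' h2'
      · intro hq
        have hx : x ∈ T i := (hTmem i x).2 hq
        exact ⟨Finset.inf'_le id hx, Finset.le_sup' id hx⟩
    refine ⟨k, uu, vv, ?_, ?_, ?_⟩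
    · intro i
      exact ((hicc i (uu i)).2 (huq i)).2
    · intro i j hij
      rw [Set.disjoint_left]
      intro z hzi hzj
      apply hij
      have := ((hicc i z).1 hzi).symm.trans ((hicc j z).1 hzj)
      exact e.symm.injective this
    · intro x y
      constructor
      · intro h
        refine Or.inr ⟨e (Quotient.mk s x), ?_, ?_⟩
        · exact (hicc _ x).2 (by simp)
        · refine (hicc _ y).2 ?_
          rw [Equiv.symm_apply_apply]
          exact Quotient.sound (hequiv.symm h)
      · rintro (rfl | ⟨i, hx, hy⟩)
        · exact hequiv.refl x
        · exact Quotient.eq.mp (((hicc i x).1 hx).trans ((hicc i y).1 hy).symm)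
end

section
/- Let L be a finite ordered set, S an interval of L, and θ = θ_S the interval relation whose only nontrivial class is S. Then the relation [x]θ ≤_θ [y]θ defined by (x_θ ≤ y^θ) or (x ∈ S↓ and y ∈ S↑) is a partial order on the factor set L/θ. -/
open Classical

variable {L : Type*}

/-- The interval relation `θ_S` for the single interval `S = [u,v]`. -/
def irel [Preorder L] (u v : L) (x y : L) : Prop :=
  x = y ∨ (x ∈ Set.Icc u v ∧ y ∈ Set.Icc u v)

/-- `θ_S` as a setoid. -/
def irelSetoid [Preorder L] (u v : L) : Setoid L where
  r := irel u v
  iseqv := by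
    constructor
    · intro x; exact Or.inl rfl
    · rintro x y (rfl | ⟨hx, hy⟩)
      · exact Or.inl rfl
      · exact Or.inr ⟨hy, hx⟩
    · rintro x y z (rfl | ⟨hx, hy⟩) h
      · exact h
      · rcases h with rfl | ⟨hy', hz⟩
        · exact Or.inr ⟨hx, hy⟩
        · exact Or.inr ⟨hx, hz⟩

/-- `x_θ`, the least element of the class of `x`. -/
noncomputable def ilow [Preorder L] (u v : L) (x : L) : L :=
  if x ∈ Set.Icc u v then u else x

/-- `x^θ`, the greatest element of the class of `x`. -/
noncomputable def ihigh [Preorder L] (u v : L) (x : L) : L :=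
  if x ∈ Set.Icc u v then v else x

/-- `S↓`, the elements outside `S` strictly below some element of `S`. -/
def iSdown [Preorder L] (u v : L) : Set L :=
  {z | z ∉ Set.Icc u v ∧ ∃ s ∈ Set.Icc u v, z < s}

/-- `S↑`, the elements outside `S` strictly above some element of `S`. -/
def iSupSet [Preorder L] (u v : L) : Set L :=
  {z | z ∉ Set.Icc u v ∧ ∃ s ∈ Set.Icc u v, s < z}

/-- `S∥`, the elements outside `S` incomparable to all of `S`. -/
def iSpar [Preorder L] (u v : L) : Set L :=
  {z | z ∉ Set.Icc u v ∧ ∀ s ∈ Set.Icc u v, ¬ s < z ∧ ¬ z < s}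

/-- The relation `≤_θ` on representatives. -/
def ile [Preorder L] (u v : L) (x y : L) : Prop :=
  ilow u v x ≤ ihigh u v y ∨ (x ∈ iSdown u v ∧ y ∈ iSupSet u v)

/-- The induced relation `≤_θ` on the factor set `L/θ`. -/
def iLeQ [Preorder L] (u v : L) (a b : Quotient (irelSetoid u v)) : Prop :=
  ∃ x y : L, a = Quotient.mk (irelSetoid u v) x ∧ b = Quotient.mk (irelSetoid u v) y ∧
    ile u v x y

/-- `S` is a nested interval. -/
def iNested [Lattice L] (u v : L) : Prop :=
  ∃ x y a w : L, x ∈ iSpar u v ∧ y ∈ iSpar u v ∧ a ∈ iSupSet u v ∧ w ∈ iSdown u v ∧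
    y = x ⊔ w ∧ x = y ⊓ a ∧ ¬ y ≤ a ∧ ¬ w ≤ x


section Aux

variable {M : Type*} [PartialOrder M] {u v : M}

lemma ilow_congr {x x' : M} (h : irel u v x x') : ilow u v x = ilow u v x' := by
  rcases h with rfl | ⟨hx, hx'⟩
  · rfl
  · simp [ilow, hx, hx']

lemma ihigh_congr {x x' : M} (h : irel u v x x') : ihigh u v x = ihigh u v x' := by
  rcases h with rfl | ⟨hx, hx'⟩
  · rfl
  · simp [ihigh, hx, hx']

lemma iSdown_congr {x x' : M} (h : irel u v x x') : x ∈ iSdown u v ↔ x' ∈ iSdown u v := by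
  rcases h with rfl | ⟨hx, hx'⟩
  · rfl
  · constructor
    · rintro ⟨hn, -⟩; exact absurd hx hn
    · rintro ⟨hn, -⟩; exact absurd hx' hn

lemma iSupm_congr {x x' : M} (h : irel u v x x') : x ∈ iSupSet u v ↔ x' ∈ iSupSet u v := by
  rcases h with rfl | ⟨hx, hx'⟩
  · rfl
  · constructor
    · rintro ⟨hn, -⟩; exact absurd hx hn
    · rintro ⟨hn, -⟩; exact absurd hx' hn

lemma ile_congr {x x' y y' : M} (hx : irel u v x x') (hy : irel u v y y') :
    ile u v x y ↔ ile u v x' y' := by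
  unfold ile
  rw [ilow_congr hx, ihigh_congr hy, iSdown_congr hx, iSupm_congr hy]

lemma ile_refl (huv : u ≤ v) (x : M) : ile u v x x := by
  left
  by_cases hx : x ∈ Set.Icc u v <;> simp [ilow, ihigh, hx, huv]

lemma ile_trans (huv : u ≤ v) {x y z : M} (hxy : ile u v x y) (hyz : ile u v y z) :
    ile u v x z := by
  rcases hxy with h1 | ⟨hxd, hyu⟩
  · rcases hyz with h2 | ⟨hyd, hzu⟩
    · by_cases hy : y ∈ Set.Icc u v
      · simp only [ihigh, hy, if_pos] at h1
        simp only [ilow, hy, if_pos] at h2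
        by_cases hx : x ∈ Set.Icc u v
        · left
          simp only [ilow, hx, if_pos]
          exact h2
        · simp only [ilow, hx, if_neg, if_false] at h1 ⊢
          by_cases hz : z ∈ Set.Icc u v
          · left; simp only [ilow, ihigh, hx, hz, if_pos, if_neg, if_false]; exact h1
          · simp only [ihigh, hz, if_neg, if_false] at h2
            right
            refine ⟨⟨hx, v, ⟨huv, le_refl v⟩, lt_of_le_of_ne h1 ?_⟩,
              ⟨hz, u, ⟨le_refl u, huv⟩, lt_of_le_of_ne h2 ?_⟩⟩
            · rintro rfl; exact hx ⟨huv, le_refl _⟩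
            · rintro rfl; exact hz ⟨le_refl _, huv⟩
      · simp only [ihigh, hy, if_neg, if_false] at h1
        simp only [ilow, hy, if_neg, if_false] at h2
        left; exact le_trans h1 h2
    · obtain ⟨hyn, s, hs, hys⟩ := hyd
      simp only [ihigh, hyn, if_neg, if_false] at h1
      by_cases hx : x ∈ Set.Icc u v
      · left
        obtain ⟨hzn, t, ht, htz⟩ := hzu
        simp only [ilow, ihigh, hx, hzn, if_pos, if_neg, if_false]
        exact le_trans ht.1 htz.le
      · simp only [ilow, hx, if_neg, if_false] at h1
        exact Or.inr ⟨⟨hx, s, hs, lt_of_le_of_lt h1 hys⟩, hzu⟩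
  · rcases hyz with h2 | ⟨hyd, hzu⟩
    · obtain ⟨hyn, s, hs, hsy⟩ := hyu
      simp only [ilow, hyn, if_neg, if_false] at h2
      by_cases hz : z ∈ Set.Icc u v
      · simp only [ihigh, hz, if_pos] at h2
        exact absurd ⟨le_trans hs.1 hsy.le, h2⟩ hyn
      · simp only [ihigh, hz, if_neg, if_false] at h2
        exact Or.inr ⟨hxd, ⟨hz, s, hs, lt_of_lt_of_le hsy h2⟩⟩
    · exact Or.inr ⟨hxd, hzu⟩

lemma ile_antisymm {x y : M} (hxy : ile u v x y) (hyx : ile u v y x) :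
    irel u v x y := by
  rcases hxy with h1 | ⟨hxd, hyu⟩
  · rcases hyx with h2 | ⟨hyd, hxu⟩
    · by_cases hx : x ∈ Set.Icc u v <;> by_cases hy : y ∈ Set.Icc u v
      · exact Or.inr ⟨hx, hy⟩
      · simp only [ilow, ihigh, hx, hy, if_pos, if_neg, if_false] at h1 h2
        exact absurd ⟨h1, h2⟩ hy
      · simp only [ilow, ihigh, hx, hy, if_pos, if_neg, if_false] at h1 h2
        exact absurd ⟨h2, h1⟩ hx
      · simp only [ilow, ihigh, hx, hy, if_neg, if_false] at h1 h2
        exact Or.inl (le_antisymm h1 h2)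
    · obtain ⟨hyn, s, hs, hys⟩ := hyd
      obtain ⟨hxn, t, ht, htx⟩ := hxu
      simp only [ilow, ihigh, hxn, hyn, if_neg, if_false] at h1
      exact absurd ⟨le_trans ht.1 htx.le, le_trans h1 (le_trans hys.le hs.2)⟩ hxn
  · obtain ⟨hxn, s, hs, hxs⟩ := hxd
    rcases hyx with h2 | ⟨hyd, hxu⟩
    · obtain ⟨hyn, t, ht, hty⟩ := hyu
      simp only [ilow, ihigh, hxn, hyn, if_neg, if_false] at h2
      exact absurd ⟨le_trans ht.1 hty.le, le_trans h2 (le_trans hxs.le hs.2)⟩ hyn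
    · obtain ⟨-, t, ht, htx⟩ := hxu
      exact absurd ⟨le_trans ht.1 htx.le, le_trans hxs.le hs.2⟩ hxn

end Aux

/-- For a finite ordered set `L` and an interval `S = [u,v]`, the relation
`≤_θ` is a partial order on the factor set `L/θ_S`. -/
theorem leTheta_isPartialOrder {L : Type*} [PartialOrder L] [Finite L] (u v : L) (huv : u ≤ v) :
    Reflexive (iLeQ u v) ∧ Transitive (iLeQ u v) ∧
      (∀ a b : Quotient (irelSetoid u v), iLeQ u v a b → iLeQ u v b a → a = b) := by
  refine ⟨?_, ?_, ?_⟩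
  · intro a
    induction a using Quotient.ind with
    | _ x => exact ⟨x, x, rfl, rfl, ile_refl huv x⟩
  · rintro a b c ⟨x, y, rfl, rfl, hxy⟩ ⟨y', z, hb, rfl, hyz⟩
    have hyy' : irel u v y y' := Quotient.exact hb
    exact ⟨x, z, rfl, rfl, ile_trans huv hxy ((ile_congr hyy' (Or.inl rfl)).mpr hyz)⟩
  · rintro a b ⟨x, y, rfl, rfl, h1⟩ ⟨y', x', hb, ha, h2⟩
    have hyy' : irel u v y y' := Quotient.exact hb
    have hxx' : irel u v x x' := Quotient.exact ha
    exact Quotient.sound (ile_antisymm h1 ((ile_congr hyy' hxx').mpr h2))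
end

section
/- Let L be a finite ordered set and θ = θ_{S₁,…,Sₖ} an interval relation on L. Define [x]θ ≤_θ [y]θ iff x_θ ≤ y^θ or there exist indices i₁,…,i_l with x_θ ∈ S_{i₁}↓, [S_{i₁}]_θ ∈ S_{i₂}↓, …, [S_{i_{l-1}}]_θ ∈ S_{i_l}↓, and y^θ ∈ S_{i_l}↑. Then ≤_θ is a preorder (reflexive and transitive) on L/θ. -/
open Classical

variable {L : Type*}

/-- The interval relation `θ_{S₁,…,Sₖ}` for the pairwise disjoint intervals
`Sᵢ = [u i, v i]`. -/
def mrel [Preorder L] {k : ℕ} (u v : Fin k → L) (x y : L) : Prop :=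
  x = y ∨ ∃ i, x ∈ Set.Icc (u i) (v i) ∧ y ∈ Set.Icc (u i) (v i)

/-- `θ_{S₁,…,Sₖ}` as a setoid (the intervals must be pairwise disjoint). -/
def mrelSetoid [Preorder L] {k : ℕ} (u v : Fin k → L)
    (hdisj : Pairwise fun i j => Disjoint (Set.Icc (u i) (v i)) (Set.Icc (u j) (v j))) :
    Setoid L where
  r := mrel u v
  iseqv := by
    constructor
    · intro x; exact Or.inl rfl
    · rintro x y (rfl | ⟨i, hx, hy⟩)
      · exact Or.inl rfl
      · exact Or.inr ⟨i, hy, hx⟩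
    · rintro x y z (rfl | ⟨i, hx, hy⟩) h
      · exact h
      · rcases h with rfl | ⟨j, hy', hz⟩
        · exact Or.inr ⟨i, hx, hy⟩
        · rcases eq_or_ne i j with rfl | hij
          · exact Or.inr ⟨i, hx, hz⟩
          · exact ((Set.disjoint_left.mp (hdisj hij) hy) hy').elim

/-- `x_θ`, the least element of the class of `x`. -/
noncomputable def mlow [Preorder L] {k : ℕ} (u v : Fin k → L) (x : L) : L :=
  if h : ∃ i, x ∈ Set.Icc (u i) (v i) then u (Classical.choose h) else x

/-- `x^θ`, the greatest element of the class of `x`. -/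
noncomputable def mhigh [Preorder L] {k : ℕ} (u v : Fin k → L) (x : L) : L :=
  if h : ∃ i, x ∈ Set.Icc (u i) (v i) then v (Classical.choose h) else x

/-- `Sᵢ↓`, the elements outside `Sᵢ` strictly below some element of `Sᵢ`. -/
def mSdown [Preorder L] {k : ℕ} (u v : Fin k → L) (i : Fin k) : Set L :=
  {z | z ∉ Set.Icc (u i) (v i) ∧ ∃ s ∈ Set.Icc (u i) (v i), z < s}

/-- `Sᵢ↑`, the elements outside `Sᵢ` strictly above some element of `Sᵢ`. -/
def mSup [Preorder L] {k : ℕ} (u v : Fin k → L) (i : Fin k) : Set L :=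
  {z | z ∉ Set.Icc (u i) (v i) ∧ ∃ s ∈ Set.Icc (u i) (v i), s < z}

/-- The relation `≤_θ` on representatives: `x_θ ≤ y^θ` or a chain of intervals connects
the class of `x` to the class of `y` through the intervals' strict down- and up-sets. -/
def mle [Preorder L] {k : ℕ} (u v : Fin k → L) (x y : L) : Prop :=
  mlow u v x ≤ mhigh u v y ∨
    ∃ (n : ℕ) (c : Fin (n + 1) → Fin k),
      mlow u v x ∈ mSdown u v (c 0) ∧
      (∀ j : Fin n, u (c j.castSucc) ∈ mSdown u v (c j.succ)) ∧
      mhigh u v y ∈ mSup u v (c (Fin.last n))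

/-- The induced relation `≤_θ` on the factor set `L/θ`. -/
def mLeQ [Preorder L] {k : ℕ} (u v : Fin k → L)
    (hdisj : Pairwise fun i j => Disjoint (Set.Icc (u i) (v i)) (Set.Icc (u j) (v j)))
    (a b : Quotient (mrelSetoid u v hdisj)) : Prop :=
  ∃ x y : L, a = Quotient.mk (mrelSetoid u v hdisj) x ∧
    b = Quotient.mk (mrelSetoid u v hdisj) y ∧ mle u v x y


section Helpers

variable {L : Type*} [PartialOrder L] {k : ℕ} {u v : Fin k → L}

/-- One step between intervals: the bottom of `Sᵢ` lies in `Sⱼ↓`. -/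
def mR (u v : Fin k → L) (i j : Fin k) : Prop := u i ∈ mSdown u v j

lemma muniq (hdisj : Pairwise fun i j => Disjoint (Set.Icc (u i) (v i)) (Set.Icc (u j) (v j)))
    {x : L} {i j : Fin k} (hi : x ∈ Set.Icc (u i) (v i)) (hj : x ∈ Set.Icc (u j) (v j)) :
    i = j := by
  by_contra h
  exact Set.disjoint_left.mp (hdisj h) hi hj

lemma mspec (_hIcc : ∀ i, u i ≤ v i) (x : L) :
    ((∀ i, x ∉ Set.Icc (u i) (v i)) ∧ mlow u v x = x ∧ mhigh u v x = x) ∨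
      ∃ i, x ∈ Set.Icc (u i) (v i) ∧ mlow u v x = u i ∧ mhigh u v x = v i := by
  by_cases h : ∃ i, x ∈ Set.Icc (u i) (v i)
  · right
    refine ⟨Classical.choose h, Classical.choose_spec h, ?_, ?_⟩
    · show (if h : ∃ i, x ∈ Set.Icc (u i) (v i) then u (Classical.choose h) else x) = _
      rw [dif_pos h]
    · show (if h : ∃ i, x ∈ Set.Icc (u i) (v i) then v (Classical.choose h) else x) = _
      rw [dif_pos h]
  · left
    have h' := h
    push_neg at h'
    refine ⟨h', ?_, ?_⟩
    · show (if h : ∃ i, x ∈ Set.Icc (u i) (v i) then u (Classical.choose h) else x) = _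
      rw [dif_neg h]
    · show (if h : ∃ i, x ∈ Set.Icc (u i) (v i) then v (Classical.choose h) else x) = _
      rw [dif_neg h]

lemma mlow_high_of_mem (hIcc : ∀ i, u i ≤ v i)
    (hdisj : Pairwise fun i j => Disjoint (Set.Icc (u i) (v i)) (Set.Icc (u j) (v j)))
    {x : L} {i : Fin k} (h : x ∈ Set.Icc (u i) (v i)) :
    mlow u v x = u i ∧ mhigh u v x = v i := by
  rcases mspec hIcc x with ⟨hn, _, _⟩ | ⟨m, hm, hl, hh⟩
  · exact absurd h (hn i)
  · rw [muniq hdisj h hm]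
    exact ⟨hl, hh⟩

lemma mlow_mem (hIcc : ∀ i, u i ≤ v i)
    (hdisj : Pairwise fun i j => Disjoint (Set.Icc (u i) (v i)) (Set.Icc (u j) (v j)))
    {x : L} {i : Fin k} (h : mlow u v x ∈ Set.Icc (u i) (v i)) :
    mlow u v x = u i := by
  rcases mspec (u := u) (v := v) hIcc x with ⟨hn, hl, _⟩ | ⟨m, _, hl, _⟩
  · exact absurd (hl ▸ h) (hn i)
  · rw [hl] at h ⊢
    rw [muniq hdisj ⟨le_rfl, hIcc m⟩ h]

lemma mhigh_mem (hIcc : ∀ i, u i ≤ v i)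
    (hdisj : Pairwise fun i j => Disjoint (Set.Icc (u i) (v i)) (Set.Icc (u j) (v j)))
    {x : L} {i : Fin k} (h : mhigh u v x ∈ Set.Icc (u i) (v i)) :
    mhigh u v x = v i := by
  rcases mspec (u := u) (v := v) hIcc x with ⟨hn, _, hh⟩ | ⟨m, _, _, hh⟩
  · exact absurd (hh ▸ h) (hn i)
  · rw [hh] at h ⊢
    rw [muniq hdisj ⟨hIcc m, le_rfl⟩ h]

lemma chain_rtg : ∀ {n : ℕ} (c : Fin (n + 1) → Fin k),
    (∀ j : Fin n, mR u v (c j.castSucc) (c j.succ)) →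
      Relation.ReflTransGen (mR u v) (c 0) (c (Fin.last n)) := by
  intro n
  induction n with
  | zero => intro c _; exact Relation.ReflTransGen.refl
  | succ n ih =>
    intro c hc
    have h1 := ih (fun j => c j.succ) (fun j => by
      show mR u v (c j.castSucc.succ) (c j.succ.succ)
      rw [Fin.succ_castSucc]
      exact hc j.succ)
    have h0 := hc 0
    rw [Fin.castSucc_zero] at h0
    exact Relation.ReflTransGen.head h0 h1

lemma rtg_to_chain {i j : Fin k} (h : Relation.ReflTransGen (mR u v) i j) :
    ∃ (n : ℕ) (c : Fin (n + 1) → Fin k), c 0 = i ∧ c (Fin.last n) = j ∧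
      ∀ m : Fin n, mR u v (c m.castSucc) (c m.succ) := by
  induction h using Relation.ReflTransGen.head_induction_on with
  | refl => exact ⟨0, fun _ => j, rfl, rfl, fun m => m.elim0⟩
  | @head a' c' hstep _ ih =>
    obtain ⟨n, c, h0, hl, hc⟩ := ih
    refine ⟨n + 1, Fin.cons a' c, rfl, ?_, ?_⟩
    · rw [← Fin.succ_last, Fin.cons_succ]; exact hl
    · intro m
      induction m using Fin.cases with
      | zero =>
        rw [Fin.castSucc_zero, Fin.cons_zero, Fin.cons_succ, h0]
        exact hstep
      | succ p =>
        rw [← Fin.succ_castSucc, Fin.cons_succ, Fin.cons_succ]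
        exact hc p

lemma mle_iff (x y : L) :
    mle u v x y ↔ mlow u v x ≤ mhigh u v y ∨
      ∃ i j, mlow u v x ∈ mSdown u v i ∧ Relation.ReflTransGen (mR u v) i j ∧
        mhigh u v y ∈ mSup u v j := by
  constructor
  · rintro (h | ⟨n, c, h0, hc, hl⟩)
    · exact Or.inl h
    · exact Or.inr ⟨c 0, c (Fin.last n), h0, chain_rtg c hc, hl⟩
  · rintro (h | ⟨i, j, h0, hrtg, hl⟩)
    · exact Or.inl h
    · obtain ⟨n, c, hc0, hcl, hc⟩ := rtg_to_chain hrtg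
      exact Or.inr ⟨n, c, by rw [hc0]; exact h0, hc, by rw [hcl]; exact hl⟩

lemma rtg_head {i j : Fin k} (h : Relation.ReflTransGen (mR u v) i j) {d : L}
    (hd : d ∈ mSup u v j) :
    u i ≤ d ∨ ∃ i', mR u v i i' ∧ Relation.ReflTransGen (mR u v) i' j := by
  rcases h.cases_head with rfl | ⟨i', hstep, hrtg⟩
  · obtain ⟨_, s, hs, hsd⟩ := hd
    exact Or.inl (le_of_lt (lt_of_le_of_lt hs.1 hsd))
  · exact Or.inr ⟨i', hstep, hrtg⟩

lemma rtg_tail (hIcc : ∀ i, u i ≤ v i)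
    (hdisj : Pairwise fun i j => Disjoint (Set.Icc (u i) (v i)) (Set.Icc (u j) (v j)))
    {i j : Fin k} (h : Relation.ReflTransGen (mR u v) i j) :
    i = j ∨ ∃ j₀, Relation.ReflTransGen (mR u v) i j₀ ∧ v j ∈ mSup u v j₀ := by
  rcases h.cases_tail with rfl | ⟨j₀, hij₀, hstep⟩
  · exact Or.inl rfl
  · right
    obtain ⟨hnj, t, ht, hlt⟩ := hstep
    have hne : j₀ ≠ j := fun he => hnj (by subst he; exact ⟨le_rfl, hIcc j₀⟩)
    refine ⟨j₀, hij₀, ?_, u j₀, ⟨le_rfl, hIcc j₀⟩, lt_of_lt_of_le hlt ht.2⟩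
    intro hmem
    exact hne (muniq hdisj hmem ⟨hIcc j, le_rfl⟩)

lemma mR_of_vsup (hIcc : ∀ i, u i ≤ v i)
    (hdisj : Pairwise fun i j => Disjoint (Set.Icc (u i) (v i)) (Set.Icc (u j) (v j)))
    {j m : Fin k} (h : v m ∈ mSup u v j) : mR u v j m := by
  obtain ⟨hnj, s, hs, hlt⟩ := h
  have hne : j ≠ m := fun he => hnj (by subst he; exact ⟨hIcc j, le_rfl⟩)
  refine ⟨fun hmem => hne (muniq hdisj ⟨le_rfl, hIcc j⟩ hmem), v m, ⟨hIcc m, le_rfl⟩,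
    lt_of_le_of_lt hs.1 hlt⟩

lemma mR_of_updown (hIcc : ∀ i, u i ≤ v i)
    (hdisj : Pairwise fun i j => Disjoint (Set.Icc (u i) (v i)) (Set.Icc (u j) (v j)))
    {j i' : Fin k} {y : L} (h1 : y ∈ mSup u v j) (h2 : y ∈ mSdown u v i') : mR u v j i' := by
  obtain ⟨hnj, s, hs, hsy⟩ := h1
  obtain ⟨hni', t, ht, hyt⟩ := h2
  refine ⟨?_, t, ht, lt_of_le_of_lt hs.1 (hsy.trans hyt)⟩
  intro hmem
  have he : j = i' := muniq hdisj ⟨le_rfl, hIcc j⟩ hmem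
  subst he
  exact hnj ⟨hs.1.trans hsy.le, hyt.le.trans ht.2⟩

lemma mle_refl (hIcc : ∀ i, u i ≤ v i) (x : L) : mle u v x x := by
  left
  rcases mspec (u := u) (v := v) hIcc x with ⟨_, hl, hh⟩ | ⟨m, _, hl, hh⟩
  · rw [hl, hh]
  · rw [hl, hh]; exact hIcc m

lemma mle_trans (hIcc : ∀ i, u i ≤ v i)
    (hdisj : Pairwise fun i j => Disjoint (Set.Icc (u i) (v i)) (Set.Icc (u j) (v j)))
    {x y z : L} (h1 : mle u v x y) (h2 : mle u v y z) : mle u v x z := by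
  rw [mle_iff] at h1 h2 ⊢
  rcases mspec (u := u) (v := v) hIcc y with ⟨hnone, hyl, hyh⟩ | ⟨m, hym, hyl, hyh⟩
  · -- `y` lies in no interval, so `mlow y = mhigh y = y`
    rw [hyh] at h1
    rw [hyl] at h2
    rcases h1 with h1 | ⟨i, j, ha, hij, hy⟩
    · rcases h2 with h2 | ⟨i', j', hy', hij', hd⟩
      · exact Or.inl (h1.trans h2)
      · obtain ⟨hyni', t, ht, hyt⟩ := hy'
        by_cases hai' : mlow u v x ∈ Set.Icc (u i') (v i')
        · have hax : mlow u v x = u i' := mlow_mem hIcc hdisj hai'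
          rcases rtg_head hij' hd with hle | ⟨i'', hstep, hrtg⟩
          · exact Or.inl (by rw [hax]; exact hle)
          · exact Or.inr ⟨i'', j', by rw [hax]; exact hstep, hrtg, hd⟩
        · exact Or.inr ⟨i', j', ⟨hai', t, ht, lt_of_le_of_lt h1 hyt⟩, hij', hd⟩
    · rcases h2 with h2 | ⟨i', j', hy', hij', hd⟩
      · obtain ⟨hynj, s, hs, hsy⟩ := hy
        by_cases hdj : mhigh u v z ∈ Set.Icc (u j) (v j)
        · have hdv : mhigh u v z = v j := mhigh_mem hIcc hdisj hdj
          rcases rtg_tail hIcc hdisj hij with rfl | ⟨j₀, hij₀, hvj⟩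
          · obtain ⟨_, s', hs', has'⟩ := ha
            exact Or.inl (by rw [hdv]; exact le_of_lt (lt_of_lt_of_le has' hs'.2))
          · exact Or.inr ⟨i, j₀, ha, hij₀, by rw [hdv]; exact hvj⟩
        · exact Or.inr ⟨i, j, ha, hij, hdj, s, hs, lt_of_lt_of_le hsy h2⟩
      · exact Or.inr ⟨i, j', ha, (hij.tail (mR_of_updown hIcc hdisj hy hy')).trans hij', hd⟩
  · -- `y ∈ Sₘ`, so `mlow y = u m`, `mhigh y = v m`
    rw [hyh] at h1
    rw [hyl] at h2
    rcases h1 with h1 | ⟨i, j, ha, hij, hvm⟩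
    · by_cases ham : mlow u v x ∈ Set.Icc (u m) (v m)
      · have hax : mlow u v x = u m := mlow_mem hIcc hdisj ham
        rcases h2 with h2 | ⟨i', j', hum, hij', hd⟩
        · exact Or.inl (by rw [hax]; exact h2)
        · exact Or.inr ⟨i', j', by rw [hax]; exact hum, hij', hd⟩
      · have halt : mlow u v x < v m :=
          lt_of_le_of_ne h1 (fun he => ham (by rw [he]; exact ⟨hIcc m, le_rfl⟩))
        have hadown : mlow u v x ∈ mSdown u v m := ⟨ham, v m, ⟨hIcc m, le_rfl⟩, halt⟩
        rcases h2 with h2 | ⟨i', j', hum, hij', hd⟩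
        · by_cases hdm : mhigh u v z ∈ Set.Icc (u m) (v m)
          · have hdv : mhigh u v z = v m := mhigh_mem hIcc hdisj hdm
            exact Or.inl (by rw [hdv]; exact h1)
          · have humd : u m < mhigh u v z :=
              lt_of_le_of_ne h2 (fun he => hdm (by rw [← he]; exact ⟨le_rfl, hIcc m⟩))
            exact Or.inr ⟨m, m, hadown, Relation.ReflTransGen.refl,
              hdm, u m, ⟨le_rfl, hIcc m⟩, humd⟩
        · exact Or.inr ⟨m, j', hadown, Relation.ReflTransGen.head hum hij', hd⟩
    · have hjm : mR u v j m := mR_of_vsup hIcc hdisj hvm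
      rcases h2 with h2 | ⟨i', j', hum, hij', hd⟩
      · by_cases hdm : mhigh u v z ∈ Set.Icc (u m) (v m)
        · have hdv : mhigh u v z = v m := mhigh_mem hIcc hdisj hdm
          exact Or.inr ⟨i, j, ha, hij, by rw [hdv]; exact hvm⟩
        · have humd : u m < mhigh u v z :=
            lt_of_le_of_ne h2 (fun he => hdm (by rw [← he]; exact ⟨le_rfl, hIcc m⟩))
          exact Or.inr ⟨i, m, ha, hij.tail hjm, hdm, u m, ⟨le_rfl, hIcc m⟩, humd⟩
      · exact Or.inr ⟨i, j', ha, (((hij.tail hjm).tail hum).trans hij'), hd⟩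

lemma mcongr (hIcc : ∀ i, u i ≤ v i)
    (hdisj : Pairwise fun i j => Disjoint (Set.Icc (u i) (v i)) (Set.Icc (u j) (v j)))
    {y y' : L} (h : mrel u v y y') :
    mlow u v y = mlow u v y' ∧ mhigh u v y = mhigh u v y' := by
  rcases h with rfl | ⟨i, hy, hy'⟩
  · exact ⟨rfl, rfl⟩
  · obtain ⟨hl, hh⟩ := mlow_high_of_mem hIcc hdisj hy
    obtain ⟨hl', hh'⟩ := mlow_high_of_mem hIcc hdisj hy'
    exact ⟨hl.trans hl'.symm, hh.trans hh'.symm⟩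

end Helpers

/-- For a finite ordered set `L` and an interval relation
`θ = θ_{S₁,…,Sₖ}`, the relation `≤_θ` is a preorder (reflexive and transitive) on `L/θ`. -/
theorem mLeQ_isPreorder {L : Type*} [PartialOrder L] [Finite L] {k : ℕ} (u v : Fin k → L)
    (hIcc : ∀ i, u i ≤ v i)
    (hdisj : Pairwise fun i j => Disjoint (Set.Icc (u i) (v i)) (Set.Icc (u j) (v j))) :
    Reflexive (mLeQ u v hdisj) ∧ Transitive (mLeQ u v hdisj) := by
  constructor
  · intro a
    obtain ⟨x, hx⟩ := Quotient.exists_rep a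
    exact ⟨x, x, hx.symm, hx.symm, mle_refl hIcc x⟩
  · rintro a b c ⟨x, y, ha, hb, hxy⟩ ⟨y', z, hb', hc, hyz⟩
    have hrel : mrel u v y y' := Quotient.exact (hb.symm.trans hb')
    obtain ⟨hl, _⟩ := mcongr hIcc hdisj hrel
    have hyz' : mle u v y z := by
      unfold mle at hyz ⊢
      rw [hl]
      exact hyz
    exact ⟨x, z, ha, hc, mle_trans hIcc hdisj hxy hyz'⟩
end

section
/- Let L be a finite lattice and θ = θ_{S₁,…,Sₖ} an interval relation on L. Then ≤_θ is a partial order on L/θ if and only if there is no Penrose crown among the intervals S₁,…,Sₖ, i.e., there are no indices i₁,…,i_l (l ≥ 2) such that min(S_{i₁}) ∈ S_{i₂}↓, min(S_{i₂}) ∈ S_{i₃}↓, …, min(S_{i_{l-1}}) ∈ S_{i_l}↓, and min(S_{i_l}) ∈ S_{i₁}↓. -/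
open Classical

variable {L : Type*}

/-!
`≤_θ` is the reflexive–transitive closure of the relation `a → b :⇔ a ≠ b ∧ a_θ ≤ b^θ` between
θ-classes, so it is always a preorder, and it is antisymmetric exactly when `→` has no cycle.
A class that is not one of the `Sᵢ` is a single point `s`, and `a → s → b` gives `a → b`
(or `a = b`, which would force `s ∈ a`), so every cycle of `→` can be rerouted through the
intervals alone. Between intervals, `Sᵢ → Sⱼ` says `min Sᵢ ∈ Sⱼ↓`, and a shortest cycle of this
relation is a Penrose crown.
-/

open Function

namespace Relation

variable {α : Type*} {r : α → α → Prop}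

theorem reflTransGen_of_fin_chain : ∀ {n : ℕ} {c : Fin (n + 1) → α},
    (∀ j : Fin n, r (c j.castSucc) (c j.succ)) → ReflTransGen r (c 0) (c (Fin.last n))
  | 0, _, _ => .refl
  | n + 1, c, h =>
    (reflTransGen_of_fin_chain (c := Fin.init c) fun j => h j.castSucc).tail (h (Fin.last n))

theorem exists_injective_fin_chain_of_reflTransGen {a b : α} (h : ReflTransGen r a b) :
    ∃ (n : ℕ) (c : Fin (n + 1) → α), c 0 = a ∧ c (Fin.last n) = b ∧ Injective c ∧
      ∀ j : Fin n, r (c j.castSucc) (c j.succ) := by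
  induction h with
  | refl =>
    exact ⟨0, fun _ => a, rfl, rfl, fun x y _ => Subsingleton.elim (α := Fin 1) x y, Fin.elim0⟩
  | @tail b d _ hbd ih =>
    obtain ⟨n, c, h0, hn, hinj, hc⟩ := ih
    by_cases hd : d ∈ Set.range c
    -- a path that comes back to `d` is cut at its earlier visit
    · obtain ⟨p, rfl⟩ := hd
      refine ⟨p, fun j => c (Fin.castLE p.isLt j), h0, congrArg c (Fin.ext rfl),
        hinj.comp (Fin.castLE_injective _), fun j => ?_⟩
      exact hc ⟨j, by omega⟩
    · refine ⟨n + 1, Fin.snoc c d, by simpa using h0, by simp,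
        Fin.snoc_injective_of_injective hinj hd, Fin.lastCases ?_ fun j => ?_⟩
      · simpa [hn] using hbd
      · rw [Fin.succ_castSucc, Fin.snoc_castSucc, Fin.snoc_castSucc]
        exact hc j

theorem exists_injective_cycle_iff_exists_transGen (hr : ∀ a, ¬ r a a) :
    (∃ (m : ℕ) (c : Fin (m + 2) → α), Injective c ∧ ∀ j, r (c j) (c (j + 1))) ↔
      ∃ a, TransGen r a a := by
  constructor
  · rintro ⟨m, c, -, hc⟩
    refine ⟨c 0, TransGen.tail' (reflTransGen_of_fin_chain fun j => ?_) ?_⟩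
    · simpa [Fin.coeSucc_eq_succ] using hc j.castSucc
    · simpa using hc (Fin.last _)
  · rintro ⟨a, h⟩
    obtain ⟨b, hab, hba⟩ := TransGen.head'_iff.1 h
    obtain ⟨n, c, h0, hn, hinj, hc⟩ := exists_injective_fin_chain_of_reflTransGen hba
    cases n with
    | zero => exact absurd (h0.symm.trans hn ▸ hab) (hr a)
    | succ m =>
      refine ⟨m, c, hinj, Fin.lastCases ?_ fun j => ?_⟩
      · simpa [hn, h0] using hab
      · simpa [Fin.coeSucc_eq_succ] using hc j

theorem reflTransGen_antisymm_iff (hr : ∀ a, ¬ r a a) :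
    (∀ a b, ReflTransGen r a b → ReflTransGen r b a → a = b) ↔ ∀ a, ¬ TransGen r a a := by
  constructor
  · intro h a haa
    obtain ⟨b, hab, hba⟩ := TransGen.head'_iff.1 haa
    exact hr a (h a b (.single hab) hba ▸ hab)
  · intro h a b hab hba
    rcases reflTransGen_iff_eq_or_transGen.1 hab with rfl | hab
    · rfl
    · exact absurd (hab.trans_left hba) (h a)

end Relation

open Relation

section Preorder

variable [Preorder L] {k : ℕ} {u v : Fin k → L}

theorem mem_mSdown_iff {i : Fin k} (hi : u i ≤ v i) {z : L} :
    z ∈ mSdown u v i ↔ z ∉ Set.Icc (u i) (v i) ∧ z ≤ v i :=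
  ⟨fun ⟨hz, _, hs, hzs⟩ => ⟨hz, hzs.le.trans hs.2⟩, fun ⟨hz, hzv⟩ =>
    ⟨hz, v i, ⟨hi, le_rfl⟩, lt_of_le_not_ge hzv fun hvz => hz ⟨hi.trans hvz, hzv⟩⟩⟩

theorem mem_mSup_iff {i : Fin k} (hi : u i ≤ v i) {z : L} :
    z ∈ mSup u v i ↔ z ∉ Set.Icc (u i) (v i) ∧ u i ≤ z :=
  ⟨fun ⟨hz, _, hs, hsz⟩ => ⟨hz, hs.1.trans hsz.le⟩, fun ⟨hz, huz⟩ =>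
    ⟨hz, u i, ⟨le_rfl, hi⟩, lt_of_le_not_ge huz fun hzu => hz ⟨huz, hzu.trans hi⟩⟩⟩

theorem mlow_le_self (x : L) : mlow u v x ≤ x := by
  unfold mlow
  split_ifs with h
  exacts [(Classical.choose_spec h).1, le_rfl]

theorem self_le_mhigh (x : L) : x ≤ mhigh u v x := by
  unfold mhigh
  split_ifs with h
  exacts [(Classical.choose_spec h).2, le_rfl]

theorem mlow_of_mem (hdisj : Pairwise (Disjoint on fun i => Set.Icc (u i) (v i))) {x : L}
    {i : Fin k} (hx : x ∈ Set.Icc (u i) (v i)) : mlow u v x = u i := by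
  have h : ∃ j, x ∈ Set.Icc (u j) (v j) := ⟨i, hx⟩
  rw [mlow, dif_pos h, hdisj.eq (Set.not_disjoint_iff.2 ⟨x, Classical.choose_spec h, hx⟩)]

theorem mhigh_of_mem (hdisj : Pairwise (Disjoint on fun i => Set.Icc (u i) (v i))) {x : L}
    {i : Fin k} (hx : x ∈ Set.Icc (u i) (v i)) : mhigh u v x = v i := by
  have h : ∃ j, x ∈ Set.Icc (u j) (v j) := ⟨i, hx⟩
  rw [mhigh, dif_pos h, hdisj.eq (Set.not_disjoint_iff.2 ⟨x, Classical.choose_spec h, hx⟩)]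

theorem mlow_eq_of_mrel (hdisj : Pairwise (Disjoint on fun i => Set.Icc (u i) (v i))) {x y : L} :
    mrel u v x y → mlow u v x = mlow u v y := by
  rintro (rfl | ⟨i, hx, hy⟩)
  exacts [rfl, (mlow_of_mem hdisj hx).trans (mlow_of_mem hdisj hy).symm]

theorem mhigh_eq_of_mrel (hdisj : Pairwise (Disjoint on fun i => Set.Icc (u i) (v i))) {x y : L} :
    mrel u v x y → mhigh u v x = mhigh u v y := by
  rintro (rfl | ⟨i, hx, hy⟩)
  exacts [rfl, (mhigh_of_mem hdisj hx).trans (mhigh_of_mem hdisj hy).symm]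

variable (u v) in
def mBelow (i j : Fin k) : Prop :=
  u i ∈ mSdown u v j

theorem mBelow_irrefl (hIcc : ∀ i, u i ≤ v i) (i : Fin k) : ¬ mBelow u v i i :=
  fun h => h.1 ⟨le_rfl, hIcc i⟩

theorem mle_iff_reflTransGen {x y : L} :
    mle u v x y ↔ mlow u v x ≤ mhigh u v y ∨
      ∃ i j, mlow u v x ∈ mSdown u v i ∧ ReflTransGen (mBelow u v) i j ∧
        mhigh u v y ∈ mSup u v j := by
  refine or_congr_right ⟨?_, ?_⟩
  · rintro ⟨n, c, hx, hc, hy⟩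
    exact ⟨c 0, c (Fin.last n), hx, reflTransGen_of_fin_chain hc, hy⟩
  · rintro ⟨i, j, hx, hij, hy⟩
    obtain ⟨n, c, rfl, rfl, -, hc⟩ := exists_injective_fin_chain_of_reflTransGen hij
    exact ⟨n, c, hx, hc, hy⟩

end Preorder

section PartialOrder

variable [PartialOrder L] {k : ℕ} {u v : Fin k → L}

theorem mrel_iff_mem_Icc (hdisj : Pairwise (Disjoint on fun i => Set.Icc (u i) (v i))) {x y : L} :
    mrel u v x y ↔ x ∈ Set.Icc (mlow u v y) (mhigh u v y) := by
  by_cases hy : ∃ i, y ∈ Set.Icc (u i) (v i)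
  · obtain ⟨i, hyi⟩ := hy
    rw [mlow_of_mem hdisj hyi, mhigh_of_mem hdisj hyi]
    refine ⟨?_, fun hxi => Or.inr ⟨i, hxi, hyi⟩⟩
    rintro (rfl | ⟨j, hxj, hyj⟩)
    · exact hyi
    · rwa [hdisj.eq (Set.not_disjoint_iff.2 ⟨y, hyi, hyj⟩)]
  · rw [mlow, mhigh, dif_neg hy, dif_neg hy, Set.Icc_self, Set.mem_singleton_iff, mrel,
      or_iff_left fun ⟨i, _, hyi⟩ => hy ⟨i, hyi⟩]

variable {hdisj : Pairwise (Disjoint on fun i => Set.Icc (u i) (v i))}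

noncomputable def classLow : Quotient (mrelSetoid u v hdisj) → L :=
  Quotient.lift (mlow u v) fun _ _ => mlow_eq_of_mrel hdisj

noncomputable def classHigh : Quotient (mrelSetoid u v hdisj) → L :=
  Quotient.lift (mhigh u v) fun _ _ => mhigh_eq_of_mrel hdisj

variable (hdisj) in
def intervalClass (i : Fin k) : Quotient (mrelSetoid u v hdisj) :=
  Quotient.mk _ (u i)

def classStep (a b : Quotient (mrelSetoid u v hdisj)) : Prop :=
  a ≠ b ∧ classLow a ≤ classHigh b

def ViaIntervals (a b : Quotient (mrelSetoid u v hdisj)) : Prop :=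
  ∃ i j, classStep a (intervalClass hdisj i) ∧ ReflTransGen (mBelow u v) i j ∧
    classStep (intervalClass hdisj j) b

@[simp]
theorem classLow_mk (x : L) : classLow (Quotient.mk (mrelSetoid u v hdisj) x) = mlow u v x :=
  rfl

@[simp]
theorem classHigh_mk (x : L) : classHigh (Quotient.mk (mrelSetoid u v hdisj) x) = mhigh u v x :=
  rfl

theorem classLow_le_classHigh (a : Quotient (mrelSetoid u v hdisj)) : classLow a ≤ classHigh a :=
  Quotient.inductionOn a fun x => (mlow_le_self x).trans (self_le_mhigh x)

theorem mk_eq_iff_mem_Icc {x : L} {a : Quotient (mrelSetoid u v hdisj)} :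
    Quotient.mk _ x = a ↔ x ∈ Set.Icc (classLow a) (classHigh a) :=
  Quotient.inductionOn a fun _ => Quotient.eq.trans (mrel_iff_mem_Icc hdisj)

theorem mk_classLow (a : Quotient (mrelSetoid u v hdisj)) : Quotient.mk _ (classLow a) = a :=
  mk_eq_iff_mem_Icc.2 ⟨le_rfl, classLow_le_classHigh a⟩

theorem mk_classHigh (a : Quotient (mrelSetoid u v hdisj)) : Quotient.mk _ (classHigh a) = a :=
  mk_eq_iff_mem_Icc.2 ⟨classLow_le_classHigh a, le_rfl⟩

theorem classLow_intervalClass (hIcc : ∀ i, u i ≤ v i) (i : Fin k) :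
    classLow (intervalClass hdisj i) = u i :=
  mlow_of_mem hdisj ⟨le_rfl, hIcc i⟩

theorem classHigh_intervalClass (hIcc : ∀ i, u i ≤ v i) (i : Fin k) :
    classHigh (intervalClass hdisj i) = v i :=
  mhigh_of_mem hdisj ⟨le_rfl, hIcc i⟩

theorem mk_eq_intervalClass (hIcc : ∀ i, u i ≤ v i) {x : L} {i : Fin k}
    (hx : x ∈ Set.Icc (u i) (v i)) : Quotient.mk _ x = intervalClass hdisj i :=
  Quotient.sound (Or.inr ⟨i, hx, le_rfl, hIcc i⟩)

theorem classLow_mem_Icc_iff (hIcc : ∀ i, u i ≤ v i) {a : Quotient (mrelSetoid u v hdisj)}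
    {i : Fin k} : classLow a ∈ Set.Icc (u i) (v i) ↔ a = intervalClass hdisj i := by
  refine ⟨fun h => (mk_classLow a).symm.trans (mk_eq_intervalClass hIcc h), ?_⟩
  rintro rfl
  rw [classLow_intervalClass hIcc]
  exact ⟨le_rfl, hIcc i⟩

theorem classHigh_mem_Icc_iff (hIcc : ∀ i, u i ≤ v i) {a : Quotient (mrelSetoid u v hdisj)}
    {i : Fin k} : classHigh a ∈ Set.Icc (u i) (v i) ↔ a = intervalClass hdisj i := by
  refine ⟨fun h => (mk_classHigh a).symm.trans (mk_eq_intervalClass hIcc h), ?_⟩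
  rintro rfl
  rw [classHigh_intervalClass hIcc]
  exact ⟨hIcc i, le_rfl⟩

theorem exists_eq_intervalClass_or_classLow_eq_classHigh (hIcc : ∀ i, u i ≤ v i)
    (a : Quotient (mrelSetoid u v hdisj)) :
    (∃ i, a = intervalClass hdisj i) ∨ classLow a = classHigh a := by
  induction a using Quotient.inductionOn with | h x => ?_
  by_cases hx : ∃ i, x ∈ Set.Icc (u i) (v i)
  · obtain ⟨i, hi⟩ := hx
    exact Or.inl ⟨i, mk_eq_intervalClass hIcc hi⟩
  · right
    rw [classLow_mk, classHigh_mk, mlow, mhigh, dif_neg hx, dif_neg hx]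

theorem classStep_irrefl (a : Quotient (mrelSetoid u v hdisj)) : ¬ classStep a a :=
  fun h => h.1 rfl

theorem classStep_trans_of_classLow_eq_classHigh {a b c : Quotient (mrelSetoid u v hdisj)}
    (hb : classLow b = classHigh b) (hab : classStep a b) (hbc : classStep b c) :
    classStep a c := by
  refine ⟨?_, (hab.2.trans_eq hb.symm).trans hbc.2⟩
  rintro rfl
  exact hab.1 ((mk_eq_iff_mem_Icc.2 ⟨hab.2.trans_eq hb.symm, hbc.2⟩).symm.trans (mk_classLow b))

theorem classStep_intervalClass_iff (hIcc : ∀ i, u i ≤ v i) {a : Quotient (mrelSetoid u v hdisj)}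
    {i : Fin k} : classStep a (intervalClass hdisj i) ↔ classLow a ∈ mSdown u v i := by
  rw [mem_mSdown_iff (hIcc i), classLow_mem_Icc_iff hIcc, classStep, classHigh_intervalClass hIcc]

theorem intervalClass_classStep_iff (hIcc : ∀ i, u i ≤ v i) {a : Quotient (mrelSetoid u v hdisj)}
    {j : Fin k} : classStep (intervalClass hdisj j) a ↔ classHigh a ∈ mSup u v j := by
  rw [mem_mSup_iff (hIcc j), classHigh_mem_Icc_iff hIcc, classStep, classLow_intervalClass hIcc,
    ne_comm]

theorem mBelow_iff_classStep (hIcc : ∀ i, u i ≤ v i) {i j : Fin k} :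
    mBelow u v i j ↔ classStep (intervalClass hdisj i) (intervalClass hdisj j) := by
  rw [classStep_intervalClass_iff hIcc, classLow_intervalClass hIcc, mBelow]

theorem mle_iff_classLow_le_classHigh_or_viaIntervals (hIcc : ∀ i, u i ≤ v i) (x y : L) :
    mle u v x y ↔
      classLow (Quotient.mk (mrelSetoid u v hdisj) x) ≤
          classHigh (Quotient.mk (mrelSetoid u v hdisj) y) ∨
        ViaIntervals (Quotient.mk (mrelSetoid u v hdisj) x) (Quotient.mk _ y) := by
  simp only [mle_iff_reflTransGen, ViaIntervals, classStep_intervalClass_iff hIcc,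
    intervalClass_classStep_iff hIcc, classLow_mk, classHigh_mk]

theorem mLeQ_iff (hIcc : ∀ i, u i ≤ v i) {a b : Quotient (mrelSetoid u v hdisj)} :
    mLeQ u v hdisj a b ↔ classLow a ≤ classHigh b ∨ ViaIntervals a b := by
  constructor
  · rintro ⟨x, y, rfl, rfl, h⟩
    exact (mle_iff_classLow_le_classHigh_or_viaIntervals hIcc x y).1 h
  · induction a, b using Quotient.inductionOn₂ with | h x y => ?_
    exact fun h => ⟨x, y, rfl, rfl, (mle_iff_classLow_le_classHigh_or_viaIntervals hIcc x y).2 h⟩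

theorem classStep_or_viaIntervals_of_transGen (hIcc : ∀ i, u i ≤ v i)
    {a b : Quotient (mrelSetoid u v hdisj)} (h : TransGen classStep a b) :
    classStep a b ∨ ViaIntervals a b := by
  induction h with
  | single h => exact Or.inl h
  | @tail b c _ hbc ih =>
    rcases exists_eq_intervalClass_or_classLow_eq_classHigh hIcc b with ⟨t, rfl⟩ | hb
    · right
      rcases ih with hat | ⟨i, j, hai, hij, hjt⟩
      · exact ⟨t, t, hat, .refl, hbc⟩
      · exact ⟨i, t, hai, hij.tail ((mBelow_iff_classStep hIcc).2 hjt), hbc⟩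
    · rcases ih with hab | ⟨i, j, hai, hij, hjb⟩
      · exact Or.inl (classStep_trans_of_classLow_eq_classHigh hb hab hbc)
      · exact Or.inr ⟨i, j, hai, hij, classStep_trans_of_classLow_eq_classHigh hb hjb hbc⟩

theorem mLeQ_iff_reflTransGen (hIcc : ∀ i, u i ≤ v i) {a b : Quotient (mrelSetoid u v hdisj)} :
    mLeQ u v hdisj a b ↔ ReflTransGen classStep a b := by
  rw [mLeQ_iff hIcc]
  constructor
  · rintro (hab | ⟨i, j, hai, hij, hjb⟩)
    · rcases eq_or_ne a b with rfl | hne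
      exacts [.refl, .single ⟨hne, hab⟩]
    · exact (ReflTransGen.single hai).trans
        ((hij.lift (intervalClass hdisj) fun _ _ => (mBelow_iff_classStep hIcc).1).tail hjb)
  · intro h
    rcases reflTransGen_iff_eq_or_transGen.1 h with rfl | h
    · exact Or.inl (classLow_le_classHigh b)
    · exact (classStep_or_viaIntervals_of_transGen hIcc h).imp And.right id

theorem exists_transGen_classStep_iff (hIcc : ∀ i, u i ≤ v i) :
    (∃ a : Quotient (mrelSetoid u v hdisj), TransGen classStep a a) ↔
      ∃ i, TransGen (mBelow u v) i i := by
  constructor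
  · rintro ⟨a, h⟩
    obtain haa | ⟨i, j, hai, hij, hja⟩ := classStep_or_viaIntervals_of_transGen hIcc h
    · exact absurd haa (classStep_irrefl a)
    rcases exists_eq_intervalClass_or_classLow_eq_classHigh hIcc a with ⟨p, rfl⟩ | ha
    · exact ⟨p, .head' ((mBelow_iff_classStep hIcc).2 hai)
        (hij.tail ((mBelow_iff_classStep hIcc).2 hja))⟩
    · exact ⟨j, .head' ((mBelow_iff_classStep hIcc).2
        (classStep_trans_of_classLow_eq_classHigh ha hja hai)) hij⟩
  · rintro ⟨i, h⟩
    exact ⟨intervalClass hdisj i,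
      h.lift (intervalClass hdisj) fun _ _ => (mBelow_iff_classStep hIcc).1⟩

end PartialOrder

theorem mLeQ_isOrder_iff_no_penrose_crown_general {L : Type*} [Lattice L] {k : ℕ}
    (u v : Fin k → L) (hIcc : ∀ i, u i ≤ v i)
    (hdisj : Pairwise fun i j => Disjoint (Set.Icc (u i) (v i)) (Set.Icc (u j) (v j))) :
    (Reflexive (mLeQ u v hdisj) ∧ Transitive (mLeQ u v hdisj) ∧
      (∀ a b : Quotient (mrelSetoid u v hdisj),
        mLeQ u v hdisj a b → mLeQ u v hdisj b a → a = b)) ↔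
    ¬ ∃ (m : ℕ) (c : Fin (m + 2) → Fin k), Function.Injective c ∧
        ∀ j : Fin (m + 2), u (c j) ∈ mSdown u v (c (j + 1)) := by
  have hle : mLeQ u v hdisj = ReflTransGen classStep := by
    ext a b
    exact mLeQ_iff_reflTransGen hIcc
  rw [hle, reflTransGen_antisymm_iff classStep_irrefl, ← not_exists,
    exists_transGen_classStep_iff hIcc,
    ← exists_injective_cycle_iff_exists_transGen (mBelow_irrefl hIcc)]
  exact ⟨fun h => h.2.2, fun h => ⟨fun _ => .refl, fun _ _ _ => .trans, h⟩⟩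

/-- For a finite lattice `L` and an interval relation `θ = θ_{S₁,…,Sₖ}`,
`≤_θ` is a partial order on `L/θ` iff there is no Penrose crown (of any order `l ≥ 2`) among
the intervals `S₁, …, Sₖ`. -/
theorem mLeQ_isOrder_iff_no_penrose_crown {L : Type*} [Lattice L] [Finite L] {k : ℕ}
    (u v : Fin k → L) (hIcc : ∀ i, u i ≤ v i)
    (hdisj : Pairwise fun i j => Disjoint (Set.Icc (u i) (v i)) (Set.Icc (u j) (v j))) :
    (Reflexive (mLeQ u v hdisj) ∧ Transitive (mLeQ u v hdisj) ∧
      (∀ a b : Quotient (mrelSetoid u v hdisj),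
        mLeQ u v hdisj a b → mLeQ u v hdisj b a → a = b)) ↔
    ¬ ∃ (m : ℕ) (c : Fin (m + 2) → Fin k), Function.Injective c ∧
        ∀ j : Fin (m + 2), u (c j) ∈ mSdown u v (c (j + 1)) :=
  mLeQ_isOrder_iff_no_penrose_crown_general u v hIcc hdisj
end

section
/- Let L be a finite lattice and θ = θ_{S₁,S₂} an interval relation with exactly two nontrivial interval classes S₁ and S₂. Then there is no Penrose crown of order 2 among S₁ and S₂; consequently ≤_θ is a partial order on L/θ, i.e., θ is order-preserving. -/
open Classical

variable {L : Type*}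

section Helpers

variable {L : Type*} [Lattice L] {u v : Fin 2 → L}

lemma fin2_resolve {i j k : Fin 2} (h1 : i ≠ j) (h2 : k ≠ j) : k = i := by
  revert h1 h2; revert i j k; decide

lemma mem_D (hIcc : ∀ i, u i ≤ v i) {z : L} {i : Fin 2} :
    z ∈ mSdown u v i ↔ z ∉ Set.Icc (u i) (v i) ∧ z < v i := by
  constructor
  · rintro ⟨h1, s, hs, h2⟩; exact ⟨h1, h2.trans_le hs.2⟩
  · rintro ⟨h1, h2⟩; exact ⟨h1, v i, ⟨hIcc i, le_rfl⟩, h2⟩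

lemma mem_U (hIcc : ∀ i, u i ≤ v i) {z : L} {i : Fin 2} :
    z ∈ mSup u v i ↔ z ∉ Set.Icc (u i) (v i) ∧ u i < z := by
  constructor
  · rintro ⟨h1, s, hs, h2⟩; exact ⟨h1, (lt_of_le_of_lt hs.1 h2)⟩
  · rintro ⟨h1, h2⟩; exact ⟨h1, u i, ⟨le_rfl, hIcc i⟩, h2⟩

variable (hIcc : ∀ i, u i ≤ v i)
variable (hdisj : Pairwise fun i j => Disjoint (Set.Icc (u i) (v i)) (Set.Icc (u j) (v j)))

include hIcc hdisj

lemma u_mem {i : Fin 2} : u i ∈ Set.Icc (u i) (v i) := ⟨le_rfl, hIcc i⟩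

lemma v_mem {i : Fin 2} : v i ∈ Set.Icc (u i) (v i) := ⟨hIcc i, le_rfl⟩

lemma u_not_mem {i j : Fin 2} (hij : i ≠ j) : u i ∉ Set.Icc (u j) (v j) :=
  fun h => Set.disjoint_left.mp (hdisj hij) (u_mem hIcc hdisj) h

lemma v_not_mem {i j : Fin 2} (hij : i ≠ j) : v i ∉ Set.Icc (u j) (v j) :=
  fun h => Set.disjoint_left.mp (hdisj hij) (v_mem hIcc hdisj) h

lemma notboth {i j : Fin 2} (hij : i ≠ j) (h1 : u i ≤ v j) (h2 : u j ≤ v i) : False :=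
  Set.disjoint_left.mp (hdisj hij) ⟨le_sup_left, sup_le (hIcc i) h2⟩
    ⟨le_sup_right, sup_le h1 (hIcc j)⟩

lemma crown {i j : Fin 2} (h1 : u i ∈ mSdown u v j) (h2 : u j ∈ mSdown u v i) : False := by
  rcases (mem_D hIcc).mp h1 with ⟨hn1, hl1⟩
  rcases (mem_D hIcc).mp h2 with ⟨hn2, hl2⟩
  rcases eq_or_ne i j with rfl | hij
  · exact hn1 (u_mem hIcc hdisj)
  · exact notboth hIcc hdisj hij hl1.le hl2.le

lemma D_ne {i j : Fin 2} (h : u i ∈ mSdown u v j) : i ≠ j := by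
  rintro rfl; exact ((mem_D hIcc).mp h).1 (u_mem hIcc hdisj)

lemma into_D {z : L} {i : Fin 2} (hn : z ∉ Set.Icc (u i) (v i)) (hle : z ≤ v i) :
    z ∈ mSdown u v i := by
  refine (mem_D hIcc).mpr ⟨hn, lt_of_le_of_ne hle ?_⟩
  rintro rfl; exact hn (v_mem hIcc hdisj)

lemma into_U {z : L} {i : Fin 2} (hn : z ∉ Set.Icc (u i) (v i)) (hle : u i ≤ z) :
    z ∈ mSup u v i := by
  refine (mem_U hIcc).mpr ⟨hn, lt_of_le_of_ne hle ?_⟩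
  rintro rfl; exact hn (u_mem hIcc hdisj)

lemma not_D_and_U {z : L} {i : Fin 2} (h1 : z ∈ mSdown u v i) (h2 : z ∈ mSup u v i) :
    False := by
  rcases (mem_D hIcc).mp h1 with ⟨hn, hl⟩
  rcases (mem_U hIcc).mp h2 with ⟨_, hg⟩
  exact hn ⟨hg.le, hl.le⟩

lemma bridge {z : L} {i j : Fin 2} (h1 : z ∈ mSup u v i) (h2 : z ∈ mSdown u v j) :
    u i ∈ mSdown u v j := by
  rcases eq_or_ne i j with rfl | hij
  · exact (not_D_and_U hIcc hdisj h2 h1).elim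
  · exact into_D hIcc hdisj (u_not_mem hIcc hdisj hij)
      (((mem_U hIcc).mp h1).2.trans ((mem_D hIcc).mp h2).2).le

lemma vU_to_D {m j : Fin 2} (h : v m ∈ mSup u v j) : u j ∈ mSdown u v m := by
  have hjm : j ≠ m := by rintro rfl; exact ((mem_U hIcc).mp h).1 (v_mem hIcc hdisj)
  exact into_D hIcc hdisj (u_not_mem hIcc hdisj hjm) ((mem_U hIcc).mp h).2.le

lemma low_high_spec (x : L) :
    (∃ i, x ∈ Set.Icc (u i) (v i) ∧ mlow u v x = u i ∧ mhigh u v x = v i) ∨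
      ((∀ i, x ∉ Set.Icc (u i) (v i)) ∧ mlow u v x = x ∧ mhigh u v x = x) := by
  by_cases h : ∃ i, x ∈ Set.Icc (u i) (v i)
  · exact Or.inl ⟨_, Classical.choose_spec h, dif_pos h, dif_pos h⟩
  · exact Or.inr ⟨fun i hi => h ⟨i, hi⟩, dif_neg h, dif_neg h⟩

lemma mem_unique {x : L} {i j : Fin 2} (h1 : x ∈ Set.Icc (u i) (v i))
    (h2 : x ∈ Set.Icc (u j) (v j)) : i = j := by
  by_contra hij
  exact Set.disjoint_left.mp (hdisj hij) h1 h2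

lemma low_high_of_mem {x : L} {i : Fin 2} (hx : x ∈ Set.Icc (u i) (v i)) :
    mlow u v x = u i ∧ mhigh u v x = v i := by
  rcases low_high_spec hIcc hdisj x with ⟨j, hj, hl, hh⟩ | ⟨hn, _, _⟩
  · obtain rfl := mem_unique hIcc hdisj hj hx
    exact ⟨hl, hh⟩
  · exact absurd hx (hn i)

lemma low_high_congr {x y : L} (h : mrel u v x y) :
    mlow u v x = mlow u v y ∧ mhigh u v x = mhigh u v y := by
  rcases h with rfl | ⟨i, hx, hy⟩
  · exact ⟨rfl, rfl⟩
  · obtain ⟨hl1, hh1⟩ := low_high_of_mem hIcc hdisj hx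
    obtain ⟨hl2, hh2⟩ := low_high_of_mem hIcc hdisj hy
    rw [hl1, hl2, hh1, hh2]
    exact ⟨rfl, rfl⟩

/-- The reduced form of `mle`. -/
def Rrel (u v : Fin 2 → L) (a d : L) : Prop :=
  a ≤ d ∨ ∃ i j : Fin 2, a ∈ mSdown u v i ∧ (i = j ∨ u i ∈ mSdown u v j) ∧ d ∈ mSup u v j

lemma mle_iff_s7 {x y : L} :
    mle u v x y ↔ Rrel u v (mlow u v x) (mhigh u v y) := by
  constructor
  · rintro (h | ⟨n, c, h0, hm, hl⟩)
    · exact Or.inl h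
    · right
      match n, c, h0, hm, hl with
      | 0, c, h0, hm, hl =>
        refine ⟨c 0, c 0, h0, Or.inl rfl, ?_⟩
        have : Fin.last 0 = (0 : Fin 1) := rfl
        rwa [this] at hl
      | 1, c, h0, hm, hl =>
        refine ⟨c 0, c 1, h0, Or.inr ?_, ?_⟩
        · have := hm 0
          simpa using this
        · have : Fin.last 1 = (1 : Fin 2) := rfl
          rwa [this] at hl
      | (n+2), c, h0, hm, hl =>
        exfalso
        have e1 := hm ⟨0, by omega⟩
        have e2 := hm ⟨1, by omega⟩
        have key : (⟨0, by omega⟩ : Fin (n+2)).succ = (⟨1, by omega⟩ : Fin (n+2)).castSucc := by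
          apply Fin.ext; simp
        rw [key] at e1
        have hne1 := D_ne hIcc hdisj e1
        have hne2 := D_ne hIcc hdisj e2
        have hCA : c ((⟨1, by omega⟩ : Fin (n+2)).succ)
            = c ((⟨0, by omega⟩ : Fin (n+2)).castSucc) := fin2_resolve hne1 hne2.symm
        rw [hCA] at e2
        exact crown hIcc hdisj e1 e2
  · rintro (h | ⟨i, j, h1, hlink, h3⟩)
    · exact Or.inl h
    · rcases hlink with rfl | hlk
      · refine Or.inr ⟨0, fun _ => i, h1, fun j => j.elim0, h3⟩
      · refine Or.inr ⟨1, ![i, j], by simpa using h1, ?_, by simpa using h3⟩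
        intro t
        have ht : t = 0 := Subsingleton.elim t 0
        subst ht
        simpa using hlk

lemma special_cases {a : L}
    (hs : (∀ i, a ∉ Set.Icc (u i) (v i)) ∨ ∃ i, a = u i) (i : Fin 2) :
    a ∉ Set.Icc (u i) (v i) ∨ a = u i := by
  rcases hs with h | ⟨j, rfl⟩
  · exact Or.inl (h i)
  · rcases eq_or_ne j i with rfl | hji
    · exact Or.inr rfl
    · exact Or.inl (u_not_mem hIcc hdisj hji)

lemma cospecial_cases {d : L}
    (hs : (∀ i, d ∉ Set.Icc (u i) (v i)) ∨ ∃ i, d = v i) (i : Fin 2) :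
    d ∉ Set.Icc (u i) (v i) ∨ d = v i := by
  rcases hs with h | ⟨j, rfl⟩
  · exact Or.inl (h i)
  · rcases eq_or_ne j i with rfl | hji
    · exact Or.inr rfl
    · exact Or.inl (v_not_mem hIcc hdisj hji)

lemma R_trans {a p q d : L}
    (hsa : (∀ i, a ∉ Set.Icc (u i) (v i)) ∨ ∃ i, a = u i)
    (hsd : (∀ i, d ∉ Set.Icc (u i) (v i)) ∨ ∃ i, d = v i)
    (hmid : (p = q ∧ ∀ i, p ∉ Set.Icc (u i) (v i)) ∨ ∃ m, p = u m ∧ q = v m)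
    (h1 : Rrel u v a q) (h2 : Rrel u v p d) : Rrel u v a d := by
  rcases h1 with h1 | ⟨i, j, hD1, hl1, hU1⟩ <;>
    rcases h2 with h2 | ⟨i', j', hD2, hl2, hU2⟩
  · -- (1,1)
    rcases hmid with ⟨rfl, pn⟩ | ⟨m, rfl, rfl⟩
    · exact Or.inl (h1.trans h2)
    · rcases special_cases hIcc hdisj hsa m with han | rfl
      · have haD : a ∈ mSdown u v m := into_D hIcc hdisj han h1
        rcases cospecial_cases hIcc hdisj hsd m with hdn | rfl
        · exact Or.inr ⟨m, m, haD, Or.inl rfl, into_U hIcc hdisj hdn h2⟩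
        · exact Or.inl h1
      · exact Or.inl h2
  · -- (1,T)
    rcases hmid with ⟨rfl, pn⟩ | ⟨m, rfl, rfl⟩
    · rcases special_cases hIcc hdisj hsa i' with han | rfl
      · have haD : a ∈ mSdown u v i' :=
          (mem_D hIcc).mpr ⟨han, lt_of_le_of_lt h1 ((mem_D hIcc).mp hD2).2⟩
        exact Or.inr ⟨i', j', haD, hl2, hU2⟩
      · rcases hl2 with rfl | hlk
        · exact Or.inl ((mem_U hIcc).mp hU2).2.le
        · exact Or.inr ⟨j', j', hlk, Or.inl rfl, hU2⟩
    · have him : m ≠ i' := D_ne hIcc hdisj hD2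
      rcases special_cases hIcc hdisj hsa m with han | rfl
      · have haD : a ∈ mSdown u v m := into_D hIcc hdisj han h1
        rcases hl2 with rfl | hlk
        · exact Or.inr ⟨m, i', haD, Or.inr hD2, hU2⟩
        · have hj'm : j' = m := fin2_resolve him (D_ne hIcc hdisj hlk).symm
          subst hj'm
          exact (crown hIcc hdisj hD2 hlk).elim
      · exact Or.inr ⟨i', j', hD2, hl2, hU2⟩
  · -- (T,1)
    rcases hmid with ⟨rfl, pn⟩ | ⟨m, rfl, rfl⟩
    · rcases cospecial_cases hIcc hdisj hsd j with hdn | rfl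
      · exact Or.inr ⟨i, j, hD1, hl1,
          into_U hIcc hdisj hdn (((mem_U hIcc).mp hU1).2.le.trans h2)⟩
      · rcases hl1 with rfl | hlk
        · exact Or.inl ((mem_D hIcc).mp hD1).2.le
        · have hij := D_ne hIcc hdisj hlk
          have hvj : v j ∈ mSup u v i :=
            (mem_U hIcc).mpr ⟨v_not_mem hIcc hdisj hij.symm, ((mem_D hIcc).mp hlk).2⟩
          exact Or.inr ⟨i, i, hD1, Or.inl rfl, hvj⟩
    · have hjD : u j ∈ mSdown u v m := vU_to_D hIcc hdisj hU1
      rcases cospecial_cases hIcc hdisj hsd m with hdn | rfl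
      · have hdU : d ∈ mSup u v m := into_U hIcc hdisj hdn h2
        rcases hl1 with rfl | hlk
        · exact Or.inr ⟨i, m, hD1, Or.inr hjD, hdU⟩
        · have hmi : m = i := fin2_resolve (D_ne hIcc hdisj hlk) (D_ne hIcc hdisj hjD).symm
          subst hmi
          exact (crown hIcc hdisj hlk hjD).elim
      · exact Or.inr ⟨i, j, hD1, hl1, hU1⟩
  · -- (T,T)
    rcases hmid with ⟨rfl, pn⟩ | ⟨m, rfl, rfl⟩
    · have hb : u j ∈ mSdown u v i' := bridge hIcc hdisj hU1 hD2
      rcases hl1 with rfl | hlk1 <;> rcases hl2 with rfl | hlk2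
      · exact Or.inr ⟨i, i', hD1, Or.inr hb, hU2⟩
      · have : j' = i := fin2_resolve (D_ne hIcc hdisj hb) (D_ne hIcc hdisj hlk2).symm
        subst this
        exact (crown hIcc hdisj hlk2 hb).elim
      · have : i' = i := fin2_resolve (D_ne hIcc hdisj hlk1) (D_ne hIcc hdisj hb).symm
        subst this
        exact (crown hIcc hdisj hlk1 hb).elim
      · have : i' = i := fin2_resolve (D_ne hIcc hdisj hlk1) (D_ne hIcc hdisj hb).symm
        subst this
        exact (crown hIcc hdisj hlk1 hb).elim
    · have hjD : u j ∈ mSdown u v m := vU_to_D hIcc hdisj hU1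
      have : i' = j := fin2_resolve (D_ne hIcc hdisj hjD) (D_ne hIcc hdisj hD2).symm
      subst this
      exact (crown hIcc hdisj hD2 hjD).elim

lemma antisym_helper1 {x y : L} (yn : ∀ i, y ∉ Set.Icc (u i) (v i)) (hxy : x ≤ y)
    {i j : Fin 2} (hD : y ∈ mSdown u v i) (hl : i = j ∨ u i ∈ mSdown u v j)
    (hU : x ∈ mSup u v j) : False := by
  rcases hl with rfl | hlk
  · exact yn i ⟨(((mem_U hIcc).mp hU).2.trans_le hxy).le, ((mem_D hIcc).mp hD).2.le⟩
  · have hij := D_ne hIcc hdisj hlk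
    have hji : u j ∈ mSdown u v i := into_D hIcc hdisj (u_not_mem hIcc hdisj hij.symm)
      ((((mem_U hIcc).mp hU).2.trans_le hxy).trans ((mem_D hIcc).mp hD).2).le
    exact crown hIcc hdisj hlk hji

lemma antisym_tt {x y : L} (xn : ∀ i, x ∉ Set.Icc (u i) (v i))
    (yn : ∀ i, y ∉ Set.Icc (u i) (v i))
    (h1 : Rrel u v x y) (h2 : Rrel u v y x) : x = y := by
  rcases h1 with h1 | ⟨i, j, hD1, hl1, hU1⟩ <;>
    rcases h2 with h2 | ⟨i', j', hD2, hl2, hU2⟩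
  · exact le_antisymm h1 h2
  · exact (antisym_helper1 hIcc hdisj yn h1 hD2 hl2 hU2).elim
  · exact (antisym_helper1 hIcc hdisj xn h2 hD1 hl1 hU1).elim
  · have b1 : u j ∈ mSdown u v i' := bridge hIcc hdisj hU1 hD2
    have b2 : u j' ∈ mSdown u v i := bridge hIcc hdisj hU2 hD1
    rcases hl1 with rfl | hlk1 <;> rcases hl2 with rfl | hlk2
    · exact (crown hIcc hdisj b1 b2).elim
    · exact ((D_ne hIcc hdisj hlk2)
        (fin2_resolve (D_ne hIcc hdisj b1).symm (D_ne hIcc hdisj b2)).symm).elim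
    · exact ((D_ne hIcc hdisj b1)
        (fin2_resolve (D_ne hIcc hdisj hlk1).symm (D_ne hIcc hdisj b2)).symm).elim
    · have : i' = i := fin2_resolve (D_ne hIcc hdisj hlk1) (D_ne hIcc hdisj b1).symm
      subst this
      exact (crown hIcc hdisj hlk1 b1).elim

lemma antisym_mixed {z : L} {m : Fin 2} (zn : ∀ i, z ∉ Set.Icc (u i) (v i))
    (h1 : Rrel u v z (v m)) (h2 : Rrel u v (u m) z) : False := by
  rcases h1 with h1 | ⟨i', j', hD2, hl2, hU2⟩ <;>
    rcases h2 with h2 | ⟨i, j, hD1, hl1, hU1⟩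
  · exact zn m ⟨h2, h1⟩
  · rcases eq_or_ne j m with rfl | hjm
    · exact zn j ⟨((mem_U hIcc).mp hU1).2.le, h1⟩
    · have hjD : u j ∈ mSdown u v m := into_D hIcc hdisj (u_not_mem hIcc hdisj hjm)
        (((mem_U hIcc).mp hU1).2.le.trans h1)
      rcases hl1 with rfl | hlk
      · exact crown hIcc hdisj hD1 hjD
      · exact hjm (fin2_resolve (D_ne hIcc hdisj hlk).symm (D_ne hIcc hdisj hD1)).symm
  · have hj'D : u j' ∈ mSdown u v m := vU_to_D hIcc hdisj hU2
    have hj'm : j' ≠ m := D_ne hIcc hdisj hj'D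
    rcases hl2 with rfl | hlk
    · have hum : u m ∈ mSdown u v i' := into_D hIcc hdisj
        (u_not_mem hIcc hdisj (D_ne hIcc hdisj hj'D).symm)
        (h2.trans ((mem_D hIcc).mp hD2).2.le)
      exact crown hIcc hdisj hum hj'D
    · have : i' = m := fin2_resolve hj'm.symm (D_ne hIcc hdisj hlk)
      subst this
      exact crown hIcc hdisj hlk hj'D
  · have hj'D : u j' ∈ mSdown u v m := vU_to_D hIcc hdisj hU2
    have : i = j' := fin2_resolve (D_ne hIcc hdisj hj'D) (D_ne hIcc hdisj hD1).symm
    subst this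
    exact crown hIcc hdisj hD1 hj'D

lemma antisym_int {p m : Fin 2} (hpm : p ≠ m) (h : Rrel u v (u m) (v p)) :
    u m ≤ v p := by
  rcases h with h | ⟨i, j, hD, hl, hU⟩
  · exact h
  · exfalso
    have hjD : u j ∈ mSdown u v p := vU_to_D hIcc hdisj hU
    have hip : i = p := fin2_resolve hpm (D_ne hIcc hdisj hD).symm
    have hjm : j = m := fin2_resolve hpm.symm (D_ne hIcc hdisj hjD)
    subst hip; subst hjm
    rcases hl with rfl | hlk
    · exact hpm rfl
    · exact crown hIcc hdisj hlk hD

lemma R_antisym {x y : L}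
    (h1 : Rrel u v (mlow u v x) (mhigh u v y))
    (h2 : Rrel u v (mlow u v y) (mhigh u v x)) : mrel u v x y := by
  rcases low_high_spec hIcc hdisj x with ⟨p, hxp, hlx, hhx⟩ | ⟨xn, hlx, hhx⟩ <;>
    rcases low_high_spec hIcc hdisj y with ⟨m, hym, hly, hhy⟩ | ⟨yn, hly, hhy⟩ <;>
    rw [hlx, hhy] at h1 <;> rw [hly, hhx] at h2
  · rcases eq_or_ne p m with rfl | hpm
    · exact Or.inr ⟨p, hxp, hym⟩
    · exact (notboth hIcc hdisj hpm (antisym_int hIcc hdisj hpm.symm h1)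
        (antisym_int hIcc hdisj hpm h2)).elim
  · exact (antisym_mixed hIcc hdisj yn h2 h1).elim
  · exact (antisym_mixed hIcc hdisj xn h1 h2).elim
  · exact Or.inl (antisym_tt hIcc hdisj xn yn h1 h2)

lemma mlow_special (x : L) :
    (∀ i, mlow u v x ∉ Set.Icc (u i) (v i)) ∨ ∃ i, mlow u v x = u i := by
  rcases low_high_spec hIcc hdisj x with ⟨i, _, hl, _⟩ | ⟨hn, hl, _⟩
  · exact Or.inr ⟨i, hl⟩
  · exact Or.inl (by intro i; rw [hl]; exact hn i)

lemma mhigh_cospecial (x : L) :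
    (∀ i, mhigh u v x ∉ Set.Icc (u i) (v i)) ∨ ∃ i, mhigh u v x = v i := by
  rcases low_high_spec hIcc hdisj x with ⟨i, _, _, hh⟩ | ⟨hn, _, hh⟩
  · exact Or.inr ⟨i, hh⟩
  · exact Or.inl (by intro i; rw [hh]; exact hn i)

lemma mid_spec (y : L) :
    (mlow u v y = mhigh u v y ∧ ∀ i, mlow u v y ∉ Set.Icc (u i) (v i)) ∨
      ∃ m, mlow u v y = u m ∧ mhigh u v y = v m := by
  rcases low_high_spec hIcc hdisj y with ⟨i, _, hl, hh⟩ | ⟨hn, hl, hh⟩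
  · exact Or.inr ⟨i, hl, hh⟩
  · exact Or.inl ⟨hl.trans hh.symm, by intro i; rw [hl]; exact hn i⟩

end Helpers

/-- For an interval relation with exactly two nontrivial classes `S₁, S₂`
on a finite lattice, there is no Penrose crown of order 2 among them, and consequently
`≤_θ` is a partial order on `L/θ`. -/
theorem two_intervals_no_penrose_crown {L : Type*} [Lattice L] [Finite L]
    (u v : Fin 2 → L) (hIcc : ∀ i, u i ≤ v i)
    (hdisj : Pairwise fun i j => Disjoint (Set.Icc (u i) (v i)) (Set.Icc (u j) (v j))) :
    ¬ (u 0 ∈ mSdown u v 1 ∧ u 1 ∈ mSdown u v 0) ∧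
    (Reflexive (mLeQ u v hdisj) ∧ Transitive (mLeQ u v hdisj) ∧
      (∀ a b : Quotient (mrelSetoid u v hdisj),
        mLeQ u v hdisj a b → mLeQ u v hdisj b a → a = b)) := by
  refine ⟨fun h => crown hIcc hdisj h.1 h.2, ?_, ?_, ?_⟩
  · -- Reflexive
    intro a
    obtain ⟨x, rfl⟩ := Quotient.exists_rep a
    refine ⟨x, x, rfl, rfl, Or.inl ?_⟩
    rcases low_high_spec hIcc hdisj x with ⟨i, _, hl, hh⟩ | ⟨_, hl, hh⟩
    · rw [hl, hh]; exact hIcc i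
    · rw [hl, hh]
  · -- Transitive
    rintro a b c ⟨x, y, rfl, rfl, hxy⟩ ⟨y', z, hb, rfl, hyz⟩
    have hrel : mrel u v y y' := Quotient.exact hb
    refine ⟨x, z, rfl, rfl, ?_⟩
    rw [mle_iff_s7 hIcc hdisj] at hxy hyz ⊢
    rw [← (low_high_congr hIcc hdisj hrel).1] at hyz
    exact R_trans hIcc hdisj (mlow_special hIcc hdisj x) (mhigh_cospecial hIcc hdisj z)
      (mid_spec hIcc hdisj y) hxy hyz
  · -- Antisymmetric
    rintro a b ⟨x, y, rfl, rfl, hxy⟩ ⟨y', x', hb, ha, hyx⟩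
    have hrel1 : mrel u v y y' := Quotient.exact hb
    have hrel2 : mrel u v x x' := Quotient.exact ha
    rw [mle_iff_s7 hIcc hdisj] at hxy hyx
    rw [← (low_high_congr hIcc hdisj hrel1).1, ← (low_high_congr hIcc hdisj hrel2).2] at hyx
    exact Quotient.sound (R_antisym hIcc hdisj hxy hyx)
end
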